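/- Let d ≥ 2 and s ≥ 3 be integers and let G be a {K_{1,d}, P_s}-free graph. Then tree-α(G) ≤ (d−1)(s−2). -/

import Mathlib

/-
Common definitions: tree decompositions, tree-independence number, treewidth,
independence/clique numbers, induced-subgraph freeness, and the special graphs
appearing in the paper "Treewidth versus clique number: induced minors,
distance to block graphs ... (tree-independence number)".
-/

namespace PaperTIN

open SimpleGraph

variable {V W : Type}

/-- A set of vertices is independent if no two of its members are adjacent. -/
def IsIndepSet (G : SimpleGraph V) (s : Set V) : Prop :=
  s.Pairwise fun u v => ¬ G.Adj u v

/-- The maximum size of an independent set of `G` contained in `s`,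
i.e. the independence number `α(G[s])` of the induced subgraph `G[s]`. -/
noncomputable def indepNumOn (G : SimpleGraph V) (s : Set V) : ℕ :=
  sSup {n | ∃ t : Finset V, ↑t ⊆ s ∧ IsIndepSet G ↑t ∧ t.card = n}

/-- The independence number `α(G)`. -/
noncomputable def indepNum (G : SimpleGraph V) : ℕ :=
  indepNumOn G Set.univ

/-- The maximum size of a clique of `G` contained in `s`,
i.e. the clique number `ω(G[s])` of the induced subgraph `G[s]`. -/
noncomputable def cliqueNumOn (G : SimpleGraph V) (s : Set V) : ℕ :=
  sSup {n | ∃ t : Finset V, ↑t ⊆ s ∧ G.IsClique ↑t ∧ t.card = n}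

/-- A tree decomposition of a graph `G`: a tree together with a bag for each node,
such that every vertex is in some bag, both endpoints of every edge lie in a common
bag, and for every vertex the set of nodes whose bag contains it induces a connected
(hence nonempty) subtree of the tree. -/
structure TreeDecomp {V : Type} (G : SimpleGraph V) where
  ι : Type
  tree : SimpleGraph ι
  isTree : tree.IsTree
  bag : ι → Set V
  bag_vert : ∀ v : V, ∃ t : ι, v ∈ bag t
  bag_edge : ∀ ⦃u v : V⦄, G.Adj u v → ∃ t : ι, u ∈ bag t ∧ v ∈ bag t
  bag_conn : ∀ v : V, (tree.induce {t : ι | v ∈ bag t}).Connected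

/-- The independence number of a tree decomposition: the maximum, over all bags,
of the independence number of the subgraph induced by the bag. -/
noncomputable def TreeDecomp.alpha {G : SimpleGraph V} (D : TreeDecomp G) : ℕ :=
  sSup {n | ∃ t : D.ι, n = indepNumOn G (D.bag t)}

/-- The tree-independence number `tree-α(G)`: the minimum independence number of a
tree decomposition of `G`. -/
noncomputable def treeIndepNum (G : SimpleGraph V) : ℕ :=
  sInf {n | ∃ D : TreeDecomp G, D.alpha = n}

/-- The width of a tree decomposition: maximum bag size minus one. -/
noncomputable def TreeDecomp.width {G : SimpleGraph V} (D : TreeDecomp G) : ℕ :=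
  sSup {n | ∃ t : D.ι, n = (D.bag t).ncard} - 1

/-- The treewidth `tw(G)`: the minimum width of a tree decomposition of `G`. -/
noncomputable def treewidth (G : SimpleGraph V) : ℕ :=
  sInf {n | ∃ D : TreeDecomp G, D.width = n}

/-- `Free H G` means that `G` has no induced subgraph isomorphic to `H`
(equivalently, there is no graph embedding of `H` into `G`). -/
def Free (H : SimpleGraph W) (G : SimpleGraph V) : Prop :=
  IsEmpty (H ↪g G)

/-- The star `K_{1,d}` with `d` leaves. -/
def star (d : ℕ) : SimpleGraph (Fin 1 ⊕ Fin d) :=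
  completeBipartiteGraph (Fin 1) (Fin d)

/-- The complete bipartite graph `K_{m,n}`. -/
def biclique (m n : ℕ) : SimpleGraph (Fin m ⊕ Fin n) :=
  completeBipartiteGraph (Fin m) (Fin n)

/-- The open neighborhood `N(X)` of a set of vertices: all vertices having a neighbor in `X`. -/
def nbhdSet (G : SimpleGraph V) (X : Set V) : Set V :=
  {v | ∃ x ∈ X, G.Adj x v}

/-- The closed neighborhood `N[X]` of a set of vertices. -/
def closedNbhdSet (G : SimpleGraph V) (X : Set V) : Set V :=
  X ∪ nbhdSet G X

/-- `S_p`: the tree obtained from the claw `K_{1,3}` by subdividing each edge exactly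
`p-1` times; equivalently a spider with three legs, each a path on `p` vertices,
attached to a center vertex. -/
def spider (p : ℕ) : SimpleGraph (Unit ⊕ Fin 3 × Fin p) :=
  SimpleGraph.fromRel fun a b =>
    (∃ j : Fin 3, ∃ i : Fin p, a = Sum.inl () ∧ b = Sum.inr (j, i) ∧ (i : ℕ) = 0) ∨
    (∃ j : Fin 3, ∃ i i' : Fin p, a = Sum.inr (j, i) ∧ b = Sum.inr (j, i') ∧
      (i' : ℕ) = (i : ℕ) + 1)

/-- The disjoint union of `k` copies of a graph `H`. -/
def kCopies (k : ℕ) (H : SimpleGraph W) : SimpleGraph (Fin k × W) where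
  Adj a b := a.1 = b.1 ∧ H.Adj a.2 b.2
  symm := by constructor; rintro a b ⟨h1, h2⟩; exact ⟨h1.symm, h2.symm⟩
  loopless := by constructor; rintro a ⟨-, h⟩; exact H.loopless.irrefl _ h

/-- Membership in the family `𝒮`: every connected component is a tree with at most three
leaves. Equivalently, the graph is a forest and each connected component contains at most
three vertices of degree one. -/
def InS [Fintype W] (S : SimpleGraph W) : Prop :=
  S.IsAcyclic ∧ ∀ c : S.ConnectedComponent,
    {v : W | S.connectedComponentMk v = c ∧ (S.neighborSet v).ncard = 1}.ncard ≤ 3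

/-- Membership in the family `L(𝒮)`: the graph is isomorphic to the line graph of some
member of `𝒮`. -/
def InLS [Fintype V] (T : SimpleGraph V) : Prop :=
  ∃ (W : Type) (_ : Fintype W) (S : SimpleGraph W),
    InS S ∧ Nonempty (T ≃g S.lineGraph)

/-- The induced biclique number of `G`: the largest `n` such that `G` contains an
induced subgraph isomorphic to `K_{n,n}`. -/
noncomputable def ibn (G : SimpleGraph V) : ℕ :=
  sSup {n | Nonempty (completeBipartiteGraph (Fin n) (Fin n) ↪g G)}

/-- The `i`-th bag (0-indexed) of the `h`-backbone structure of an induced path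
`f : P_ℓ ↪g G`: the closed neighborhood of the set of vertices
`{v_i, …, v_{i+h-1}}` of the path. -/
def backboneBag (G : SimpleGraph V) {ℓ : ℕ} (f : pathGraph ℓ ↪g G) (h i : ℕ) : Set V :=
  closedNbhdSet G (⇑f '' {j : Fin ℓ | i ≤ (j : ℕ) ∧ (j : ℕ) ≤ i + h - 1})

/-- The vertex set (as a set of vertices of the ambient graph) of a connected component
of the induced subgraph `G[s]`. -/
def componentVerts {G : SimpleGraph V} {s : Set V}
    (C : (G.induce s).ConnectedComponent) : Set V :=
  Subtype.val '' {w : s | (G.induce s).connectedComponentMk w = C}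

/-!
Gyárfás' path argument. Grow an induced path greedily: `w_1` lies in a component `C_1` of `G`,
`C_{i+1}` is a component of `C_i \ N[w_i]`, and `w_{i+1}` is a neighbour of `w_i` in `C_i` with a
neighbour in `C_{i+1}`. Every vertex outside `C_i` adjacent to `C_i` is dominated by
`w_1, …, w_i`, while `C_i` avoids `N[w_1, …, w_{i-1}]`; hence `w_1, …, w_i` followed by a neighbour
of `w_i` in `C_i` is an induced path, and `P_s`-freeness leaves at most `s - 2` path vertices.
All such chains, ordered by extension, form a tree, and the bags `N[w_1, …, w_k] ∩ N[C_k]` make it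
a tree decomposition. Each bag is dominated by at most `s - 2` vertices, and by
`K_{1,d}`-freeness an independent set contains at most `d - 1` vertices of each closed
neighbourhood.
-/

section Neighbourhoods

variable {G : SimpleGraph V}

lemma mem_closedNbhdSet {X : Set V} {x : V} :
    x ∈ closedNbhdSet G X ↔ x ∈ X ∨ ∃ y ∈ X, G.Adj y x :=
  Iff.rfl

lemma mem_closedNbhdSet_singleton {w x : V} : x ∈ closedNbhdSet G {w} ↔ x = w ∨ G.Adj w x := by
  simp [mem_closedNbhdSet]

lemma closedNbhdSet_mono {X Y : Set V} (h : X ⊆ Y) : closedNbhdSet G X ⊆ closedNbhdSet G Y := by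
  rintro x (hx | ⟨y, hy, hyx⟩)
  exacts [Or.inl (h hx), Or.inr ⟨y, h hy, hyx⟩]

@[simp] lemma closedNbhdSet_empty : closedNbhdSet G ∅ = ∅ := by
  ext; simp [mem_closedNbhdSet]

lemma closedNbhdSet_insert (w : V) (X : Set V) :
    closedNbhdSet G (insert w X) = closedNbhdSet G {w} ∪ closedNbhdSet G X := by
  ext x; simp only [mem_closedNbhdSet, Set.mem_insert_iff, Set.mem_singleton_iff,
    exists_eq_or_imp, exists_eq_left, Set.mem_union]; tauto

lemma mem_closedNbhdSet_of_adj {X : Set V} {x y : V} (hy : y ∈ X) (h : G.Adj x y) :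
    x ∈ closedNbhdSet G X :=
  Or.inr ⟨y, hy, h.symm⟩

lemma exists_mem_closedNbhdSet_singleton {X : Set V} {w : V} (h : w ∈ closedNbhdSet G X) :
    ∃ x ∈ X, x ∈ closedNbhdSet G {w} := by
  rcases h with hw | ⟨y, hy, hyw⟩
  exacts [⟨w, hw, Or.inl rfl⟩, ⟨y, hy, Or.inr ⟨w, rfl, hyw.symm⟩⟩]

end Neighbourhoods

section Components

variable {G : SimpleGraph V} {s : Set V}

lemma componentVerts_subset (K : (G.induce s).ConnectedComponent) : componentVerts K ⊆ s := by
  rintro _ ⟨x, -, rfl⟩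
  exact x.2

lemma componentVerts_nonempty (K : (G.induce s).ConnectedComponent) :
    (componentVerts K).Nonempty :=
  let ⟨x, hx⟩ := K.nonempty_supp
  ⟨x, x, hx, rfl⟩

lemma mem_componentVerts_of_adj {K : (G.induce s).ConnectedComponent} {x y : V}
    (hx : x ∈ componentVerts K) (hy : y ∈ s) (hxy : G.Adj x y) : y ∈ componentVerts K := by
  obtain ⟨x, rfl, rfl⟩ := hx
  have hadj : (G.induce s).Adj x ⟨y, hy⟩ := hxy
  exact ⟨⟨y, hy⟩, (ConnectedComponent.connectedComponentMk_eq_of_adj hadj).symm, rfl⟩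

lemma eq_of_mem_componentVerts {K K' : (G.induce s).ConnectedComponent} {x : V}
    (h : x ∈ componentVerts K) (h' : x ∈ componentVerts K') : K = K' := by
  obtain ⟨x, rfl, rfl⟩ := h
  obtain ⟨x', rfl, hx⟩ := h'
  rw [Subtype.ext hx]

lemma exists_adj_of_subset_componentVerts {K : (G.induce s).ConnectedComponent} {D : Set V}
    (hD : D ⊆ componentVerts K) (hne : D.Nonempty) (hproper : ¬ componentVerts K ⊆ D) :
    ∃ x ∈ componentVerts K, x ∉ D ∧ ∃ y ∈ D, G.Adj y x := by
  classical
  obtain ⟨_, ha⟩ := hne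
  obtain ⟨a, haK, rfl⟩ := hD ha
  obtain ⟨_, ⟨c, hcK, rfl⟩, hc⟩ := Set.not_subset.1 hproper
  obtain ⟨p⟩ := ConnectedComponent.exact (haK.trans hcK.symm)
  obtain ⟨e, hep, he, he'⟩ := p.exists_boundary_dart {z | z.1 ∈ D} ha hc
  have hreach := (p.takeUntil _ (p.dart_snd_mem_support_of_mem_darts hep)).reachable
  exact ⟨e.snd, ⟨e.snd, (ConnectedComponent.sound hreach).symm.trans haK, rfl⟩, he', e.fst, he,
    e.adj⟩

end Components

section InducedPaths

variable (G : SimpleGraph V)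

def IsInducedPath (L : List V) : Prop :=
  L.Nodup ∧ ∀ (i j : ℕ) (hi : i < L.length) (hj : j < L.length),
    G.Adj L[i] L[j] ↔ i + 1 = j ∨ j + 1 = i

variable {G}

lemma isInducedPath_nil : IsInducedPath G [] := by
  simp [IsInducedPath]

lemma isInducedPath_singleton (a : V) : IsInducedPath G [a] := by
  refine ⟨List.nodup_singleton a, fun i j hi hj => ?_⟩
  simp only [List.length_singleton, Nat.lt_one_iff] at hi hj
  subst hi hj
  simp

lemma IsInducedPath.cons {c w : V} {P : List V} (hP : IsInducedPath G (w :: P))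
    (hcw : G.Adj c w) (hc : c ∉ closedNbhdSet G {x | x ∈ P}) : IsInducedPath G (c :: w :: P) := by
  have hadj : ∀ (j : ℕ) (hj : j < (w :: P).length), G.Adj c (w :: P)[j] ↔ j = 0 := by
    rintro (_ | j) hj
    · simpa using hcw
    · simp only [List.getElem_cons_succ, Nat.add_one_ne_zero, iff_false]
      exact fun h => hc (mem_closedNbhdSet_of_adj (List.getElem_mem _) h)
  refine ⟨List.nodup_cons.2 ⟨?_, hP.1⟩, ?_⟩
  · rintro (_ | ⟨_, hcP⟩)
    · exact G.loopless.irrefl _ hcw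
    · exact hc (Or.inl hcP)
  rintro (_ | i) (_ | j) hi hj
  · simp
  · simpa [eq_comm] using hadj j (by simpa using hj)
  · simpa [G.adj_comm] using hadj i (by simpa using hi)
  · simpa using hP.2 i j (by simpa using hi) (by simpa using hj)

def IsInducedPath.embedding {L : List V} (h : IsInducedPath G L) : pathGraph L.length ↪g G where
  toFun i := L[i]
  inj' i j hij := Fin.ext (h.1.getElem_inj_iff.1 hij)
  map_rel_iff' {i j} := by simpa [pathGraph_adj] using h.2 i j i.2 j.2

lemma IsInducedPath.length_lt {s : ℕ} (h2 : Free (pathGraph s) G) {L : List V}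
    (h : IsInducedPath G L) : L.length < s := by
  by_contra! hs
  let f : pathGraph s ↪g pathGraph L.length :=
    { toFun := Fin.castLE hs
      inj' := Fin.castLE_injective hs
      map_rel_iff' := by simp [pathGraph_adj] }
  exact h2.false (f.trans h.embedding)

end InducedPaths

section Stars

variable {G : SimpleGraph V} {d : ℕ}

lemma card_le_of_subset_closedNbhdSet_singleton (h1 : Free (star d) G) (hd : 2 ≤ d) {w : V}
    {T : Finset V} (hT : ↑T ⊆ closedNbhdSet G {w}) (hind : IsIndepSet G ↑T) : T.card ≤ d - 1 := by
  by_contra! hcard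
  by_cases hw : w ∈ T
  · have : T ⊆ {w} := fun x hx => by
      rcases mem_closedNbhdSet_singleton.1 (hT hx) with rfl | hwx
      · exact Finset.mem_singleton_self x
      · exact absurd hwx (hind hw hx (G.ne_of_adj hwx))
    have := Finset.card_le_card this
    simp only [Finset.card_singleton] at this
    omega
  obtain ⟨T', hT'T, hT'⟩ := Finset.exists_subset_card_eq (show d ≤ T.card by omega)
  let e : Fin d → V := fun i => ((Finset.equivFinOfCardEq hT').symm i).1
  have he : Function.Injective e := fun i j hij =>
    (Finset.equivFinOfCardEq hT').symm.injective (Subtype.ext hij)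
  have heT : ∀ i, e i ∈ T := fun i => hT'T ((Finset.equivFinOfCardEq hT').symm i).2
  have hwe : ∀ i, G.Adj w (e i) := fun i =>
    (mem_closedNbhdSet_singleton.1 (hT (heT i))).resolve_left fun h => hw (h ▸ heT i)
  refine h1.false ⟨⟨Sum.elim (fun _ => w) e, ?_⟩, ?_⟩
  · rintro (i | i) (j | j) hij
    · rw [Subsingleton.elim i j]
    · exact absurd hij (G.ne_of_adj (hwe j))
    · exact absurd hij.symm (G.ne_of_adj (hwe i))
    · rw [he hij]
  · intro a b
    change G.Adj (Sum.elim (fun _ => w) e a) (Sum.elim (fun _ => w) e b) ↔ (star d).Adj a b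
    rcases a with i | i <;> rcases b with j | j
    · simp [star]
    · simpa [star] using hwe j
    · simpa [star] using (hwe i).symm
    · simp only [Sum.elim_inr, star, completeBipartiteGraph_adj, Sum.isLeft_inr, Sum.isRight_inr,
        Bool.false_eq_true, false_and, and_false, or_false, iff_false]
      exact fun hij => hind (heT i) (heT j) (fun h => G.ne_of_adj hij (congrArg e (he h))) hij

lemma card_le_of_subset_closedNbhdSet (h1 : Free (star d) G) (hd : 2 ≤ d) (P : List V)
    {T : Finset V} (hT : ↑T ⊆ closedNbhdSet G {x | x ∈ P}) (hind : IsIndepSet G ↑T) :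
    T.card ≤ (d - 1) * P.length := by
  classical
  have hcover : T ⊆ P.toFinset.biUnion fun w => T.filter (· ∈ closedNbhdSet G {w}) := by
    intro x hx
    rcases hT hx with hxP | ⟨w, hwP, hwx⟩
    · exact Finset.mem_biUnion.2 ⟨x, List.mem_toFinset.2 hxP, Finset.mem_filter.2 ⟨hx, Or.inl rfl⟩⟩
    · exact Finset.mem_biUnion.2 ⟨w, List.mem_toFinset.2 hwP,
        Finset.mem_filter.2 ⟨hx, mem_closedNbhdSet_singleton.2 (Or.inr hwx)⟩⟩
  calc T.card ≤ ∑ w ∈ P.toFinset, (T.filter (· ∈ closedNbhdSet G {w})).card :=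
        (Finset.card_le_card hcover).trans Finset.card_biUnion_le
    _ ≤ ∑ _w ∈ P.toFinset, (d - 1) := Finset.sum_le_sum fun w _ =>
        card_le_of_subset_closedNbhdSet_singleton h1 hd (fun x hx => (Finset.mem_filter.1 hx).2)
          (hind.mono (Finset.coe_subset.2 (Finset.filter_subset _ _)))
    _ ≤ (d - 1) * P.length := by
        rw [Finset.sum_const, smul_eq_mul, mul_comm]
        exact Nat.mul_le_mul_left _ P.toFinset_card_le

end Stars

section ParentTrees

variable {ι : Type} (p : ι → ι)

def parentGraph : SimpleGraph ι :=
  SimpleGraph.fromRel fun a b => a = p b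

variable {p} (rk : ι → ℕ)

lemma parentGraph_adj_parent {a : ι} (h : p a ≠ a) : (parentGraph p).Adj a (p a) :=
  ⟨h.symm, Or.inr rfl⟩

lemma isAcyclic_parentGraph (hrk : ∀ a, p a ≠ a → rk (p a) < rk a) :
    (parentGraph p).IsAcyclic := by
  classical
  intro v c hc
  obtain ⟨m, hm, hmax⟩ := c.support.toFinset.exists_max_image rk ⟨v, by simp⟩
  rw [List.mem_toFinset] at hm
  have hc' := hc.rotate hm
  -- on the cycle, a vertex of maximal rank can only be adjacent to its parent
  have hparent : ∀ x ∈ (c.rotate m hm).support, (parentGraph p).Adj m x → x = p m := by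
    intro x hx hmx
    rcases hmx.2 with rfl | h
    · have hlt := hrk x hmx.1
      have hle := hmax x (by simpa using hx)
      omega
    · exact h
  exact hc'.snd_ne_penultimate
    ((hparent _ (Walk.getVert_mem_support _ _) (Walk.adj_snd hc'.not_nil)).trans
      (hparent _ (Walk.getVert_mem_support _ _) (Walk.adj_penultimate hc'.not_nil).symm).symm)

lemma isTree_parentGraph (hrk : ∀ a, p a ≠ a → rk (p a) < rk a) (ρ : ι)
    (hroot : ∀ a, p a = a → a = ρ) : (parentGraph p).IsTree := by
  have hreach : ∀ a, (parentGraph p).Reachable a ρ := by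
    intro a
    induction h : rk a using Nat.strong_induction_on generalizing a with
    | _ n ih =>
      by_cases ha : p a = a
      · rw [hroot a ha]
      · exact (parentGraph_adj_parent ha).reachable.trans (ih _ (h ▸ hrk a ha) _ rfl)
  have : Nonempty ι := ⟨ρ⟩
  exact ⟨⟨fun a b => (hreach a).trans (hreach b).symm⟩, isAcyclic_parentGraph rk hrk⟩

lemma connected_induce_parentGraph {S : Set ι} {a₀ : ι} (ha₀ : a₀ ∈ S)
    (hS : ∀ a ∈ S, a ≠ a₀ → p a ∈ S ∧ rk (p a) < rk a) :
    ((parentGraph p).induce S).Connected := by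
  have hreach : ∀ a : S, ((parentGraph p).induce S).Reachable a ⟨a₀, ha₀⟩ := by
    rintro ⟨a, ha⟩
    induction h : rk a using Nat.strong_induction_on generalizing a with
    | _ n ih =>
      by_cases h₀ : a = a₀
      · subst h₀
        rfl
      · obtain ⟨hpa, hlt⟩ := hS a ha h₀
        have hadj : ((parentGraph p).induce S).Adj ⟨a, ha⟩ ⟨p a, hpa⟩ :=
          parentGraph_adj_parent (a := a) fun e => by rw [e] at hlt; omega
        exact hadj.reachable.trans (ih _ (h ▸ hlt) _ hpa rfl)
  have : Nonempty S := ⟨⟨a₀, ha₀⟩⟩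
  exact ⟨fun a b => (hreach a).trans (hreach b).symm⟩

end ParentTrees

lemma List.exists_cons_suffix_of_suffix {α : Type} {l l' : List α} (h : l <:+ l') (hne : l ≠ l') :
    ∃ x, x :: l <:+ l' := by
  obtain ⟨u, rfl⟩ := h
  rcases u.eq_nil_or_concat with rfl | ⟨u, x, rfl⟩
  · exact absurd rfl hne
  · exact ⟨x, u, by simp⟩

section GyarfasChains

/-!
A chain `[(w_k, C_k), …, (w_1, C_1)]`, newest pair first, records a Gyárfás path `w_1, …, w_k`:
`C_1` is a component of `G` and `w_1 ∈ C_1`; `C_{i+1}` is a component of `C_i \ N[w_i]` and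
`w_{i+1}` is a vertex of `C_i \ C_{i+1}` adjacent to `C_{i+1}`. The empty chain is the root, with
`current [] = remaining G [] = V`. A vertex `v` lies in `current t \ remaining G t` exactly at the
node `t` where `v ∈ C_k ∩ N[w_k]`.
-/

variable (G : SimpleGraph V)

def pathOf (l : List (V × Set V)) : List V :=
  l.map Prod.fst

def pathSet (l : List (V × Set V)) : Set V :=
  {x | x ∈ pathOf l}

def current : List (V × Set V) → Set V
  | [] => Set.univ
  | (_, C) :: _ => C

def remaining : List (V × Set V) → Set V
  | [] => Set.univ
  | (w, C) :: _ => C \ closedNbhdSet G {w}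

noncomputable def pivot :
    (l : List (V × Set V)) → (G.induce (remaining G l)).ConnectedComponent → V
  | [], K =>
    have : Nonempty V := ⟨K.nonempty_supp.some⟩
    Classical.epsilon (· ∈ componentVerts K)
  | (_, C) :: _, K =>
    have : Nonempty V := ⟨K.nonempty_supp.some⟩
    Classical.epsilon fun x => x ∈ C \ componentVerts K ∧ ∃ y ∈ componentVerts K, G.Adj y x

inductive GyarfasChain : List (V × Set V) → Prop
  | nil : GyarfasChain []
  | cons {l : List (V × Set V)} (h : GyarfasChain l)
      (K : (G.induce (remaining G l)).ConnectedComponent) :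
      GyarfasChain ((pivot G l K, componentVerts K) :: l)

def chainBag (l : List (V × Set V)) : Set V :=
  closedNbhdSet G (pathSet l) ∩ closedNbhdSet G (current l)

variable {G} {l l' t : List (V × Set V)} {v w : V} {C : Set V}

lemma pathSet_cons : pathSet ((w, C) :: l) = insert w (pathSet l) := by
  ext; simp [pathSet, pathOf]

lemma pathSet_mono (h : l <:+ l') : pathSet l ⊆ pathSet l' :=
  fun _ hx => (h.map Prod.fst).subset hx

lemma remaining_subset_current (l : List (V × Set V)) : remaining G l ⊆ current l := by
  rcases l with _ | ⟨⟨w, C⟩, l⟩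
  exacts [subset_rfl, Set.sdiff_subset]

lemma current_diff_remaining_subset (l : List (V × Set V)) :
    current l \ remaining G l ⊆ closedNbhdSet G (pathSet l) := by
  rcases l with _ | ⟨⟨w, C⟩, l⟩
  · simp [remaining, current]
  · rintro x ⟨hxC, hx⟩
    rw [pathSet_cons, closedNbhdSet_insert]
    exact Or.inl (by_contra fun hxw => hx ⟨hxC, hxw⟩)

lemma mem_chainBag_of_mem_current_diff (hv : v ∈ current t \ remaining G t) :
    v ∈ chainBag G t :=
  ⟨current_diff_remaining_subset t hv, Or.inl hv.1⟩

lemma GyarfasChain.tail (h : GyarfasChain G l) : GyarfasChain G l.tail := by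
  cases h with
  | nil => exact .nil
  | cons h _ => exact h

lemma GyarfasChain.of_suffix (h : GyarfasChain G l') (hs : l <:+ l') : GyarfasChain G l := by
  obtain ⟨u, rfl⟩ := hs
  induction u with
  | nil => exact h
  | cons x u ih => exact ih h.tail

lemma GyarfasChain.current_cons_subset (h : GyarfasChain G ((w, C) :: l)) :
    C ⊆ remaining G l := by
  cases h with
  | cons _ K => exact componentVerts_subset K

lemma GyarfasChain.current_subset_remaining (h : GyarfasChain G t) (hs : l <:+ t) (hne : l ≠ t) :
    current t ⊆ remaining G l := by
  induction h with
  | nil => exact absurd (List.eq_nil_of_suffix_nil hs) hne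
  | @cons t h K ih =>
    rcases List.suffix_cons_iff.1 hs with rfl | hs
    · exact absurd rfl hne
    · have hK := componentVerts_subset K
      by_cases hlt : l = t
      · subst hlt
        exact hK
      · exact hK.trans ((remaining_subset_current t).trans (ih hs hlt))

lemma GyarfasChain.current_anti (h : GyarfasChain G t) (hs : l <:+ t) : current t ⊆ current l := by
  by_cases hlt : l = t
  · rw [hlt]
  · exact (h.current_subset_remaining hs hlt).trans (remaining_subset_current l)

lemma pivot_cons_spec (h : GyarfasChain G ((w, C) :: l)) (hw : w ∈ closedNbhdSet G C)
    (K : (G.induce (remaining G ((w, C) :: l))).ConnectedComponent) :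
    pivot G ((w, C) :: l) K ∈ C \ componentVerts K ∧
      ∃ y ∈ componentVerts K, G.Adj y (pivot G ((w, C) :: l) K) := by
  cases h with
  | cons h K₀ =>
    have hD : componentVerts K ⊆ componentVerts K₀ :=
      (componentVerts_subset K).trans Set.sdiff_subset
    obtain ⟨c, hcC, hcw⟩ := exists_mem_closedNbhdSet_singleton hw
    have hproper : ¬ componentVerts K₀ ⊆ componentVerts K :=
      fun hsub => (componentVerts_subset K (hsub hcC)).2 hcw
    obtain ⟨x, hxC, hxD, y, hyD, hyx⟩ :=
      exists_adj_of_subset_componentVerts hD (componentVerts_nonempty K) hproper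
    exact Classical.epsilon_spec (p := fun x => x ∈ componentVerts K₀ \ componentVerts K ∧
      ∃ y ∈ componentVerts K, G.Adj y x) ⟨x, ⟨hxC, hxD⟩, y, hyD, hyx⟩

lemma GyarfasChain.pivot_mem_closedNbhdSet (h : GyarfasChain G l)
    (K : (G.induce (remaining G l)).ConnectedComponent) :
    pivot G l K ∈ closedNbhdSet G (componentVerts K) := by
  induction h with
  | nil => exact Or.inl (Classical.epsilon_spec (componentVerts_nonempty K))
  | cons h K₀ ih =>
    obtain ⟨-, y, hy, hyp⟩ := pivot_cons_spec (h.cons K₀) (ih K₀) K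
    exact Or.inr ⟨y, hy, hyp⟩

lemma GyarfasChain.anchor (h : GyarfasChain G ((w, C) :: l)) : w ∈ closedNbhdSet G C := by
  cases h with
  | cons h K => exact h.pivot_mem_closedNbhdSet K

lemma GyarfasChain.pivot_spec (h : GyarfasChain G ((w, C) :: l))
    (K : (G.induce (remaining G ((w, C) :: l))).ConnectedComponent) :
    pivot G ((w, C) :: l) K ∈ C \ componentVerts K ∧
      ∃ y ∈ componentVerts K, G.Adj y (pivot G ((w, C) :: l) K) :=
  pivot_cons_spec h h.anchor K

lemma GyarfasChain.adj_pivot (h : GyarfasChain G ((w, C) :: l))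
    (K : (G.induce (remaining G ((w, C) :: l))).ConnectedComponent) :
    G.Adj w (pivot G ((w, C) :: l) K) := by
  obtain ⟨⟨hpC, hpD⟩, y, hyD, hyp⟩ := h.pivot_spec K
  have hy := componentVerts_subset K hyD
  have hpw : pivot G ((w, C) :: l) K ∈ closedNbhdSet G {w} :=
    by_contra fun hpw => hpD (mem_componentVerts_of_adj hyD ⟨hpC, hpw⟩ hyp)
  rcases mem_closedNbhdSet_singleton.1 hpw with hpw | hwp
  · rw [hpw] at hyp
    exact absurd (mem_closedNbhdSet_singleton.2 (Or.inr hyp.symm)) hy.2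
  · exact hwp

lemma GyarfasChain.disjoint_remaining (h : GyarfasChain G l) :
    Disjoint (remaining G l) (closedNbhdSet G (pathSet l)) := by
  induction h with
  | nil => simp [pathSet, pathOf]
  | cons h K ih =>
    rw [pathSet_cons, closedNbhdSet_insert]
    exact Set.disjoint_union_right.2
      ⟨Set.disjoint_sdiff_left, ih.mono_left (Set.sdiff_subset.trans (componentVerts_subset K))⟩

lemma GyarfasChain.isInducedPath (h : GyarfasChain G l) : IsInducedPath G (pathOf l) := by
  induction h with
  | nil => exact isInducedPath_nil
  | @cons l h K ih =>
    rcases l with _ | ⟨⟨w, C⟩, r⟩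
    · exact isInducedPath_singleton _
    · refine ih.cons (h.adj_pivot K).symm fun hp => ?_
      exact h.tail.disjoint_remaining.notMem_of_mem_left
        (h.current_cons_subset (h.pivot_spec K).1.1) hp

lemma closedNbhdSet_componentVerts_subset
    (hl : closedNbhdSet G (current l) ⊆ current l ∪ closedNbhdSet G (pathSet l))
    (K : (G.induce (remaining G l)).ConnectedComponent) :
    closedNbhdSet G (componentVerts K) ⊆ componentVerts K ∪ closedNbhdSet G (pathSet l) := by
  rintro x (hx | ⟨y, hyK, hyx⟩)
  · exact Or.inl hx
  by_cases hxr : x ∈ remaining G l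
  · exact Or.inl (mem_componentVerts_of_adj hyK hxr hyx)
  refine Or.inr ?_
  have hy := remaining_subset_current l (componentVerts_subset K hyK)
  rcases hl (mem_closedNbhdSet_of_adj hy hyx.symm) with hxc | hxp
  exacts [current_diff_remaining_subset l ⟨hxc, hxr⟩, hxp]

lemma GyarfasChain.closedNbhdSet_current_subset (h : GyarfasChain G l) :
    closedNbhdSet G (current l) ⊆ current l ∪ closedNbhdSet G (pathSet l) := by
  induction h with
  | nil => exact fun x _ => Or.inl (Set.mem_univ x)
  | cons h K ih =>
    refine (closedNbhdSet_componentVerts_subset ih K).trans (Set.union_subset_union_right _ ?_)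
    exact closedNbhdSet_mono (pathSet_mono (List.suffix_cons _ _))

lemma GyarfasChain.mem_chainBag_tail (h : GyarfasChain G ((w, C) :: l))
    (hv : v ∈ chainBag G ((w, C) :: l)) (hvC : v ∉ C) : v ∈ chainBag G l := by
  cases h with
  | cons h K =>
    refine ⟨?_, closedNbhdSet_mono
      ((componentVerts_subset K).trans (remaining_subset_current l)) hv.2⟩
    exact ((closedNbhdSet_componentVerts_subset h.closedNbhdSet_current_subset K) hv.2).resolve_left
      hvC

lemma GyarfasChain.remaining_ssubset (h : GyarfasChain G ((w, C) :: l)) :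
    remaining G ((w, C) :: l) ⊂ remaining G l := by
  have hC := h.current_cons_subset
  obtain ⟨c, hcC, hcw⟩ := exists_mem_closedNbhdSet_singleton h.anchor
  exact ⟨Set.sdiff_subset.trans hC, fun hsub => (hsub (hC hcC)).2 hcw⟩

end GyarfasChains

section Capture

variable {G : SimpleGraph V} {l t t' : List (V × Set V)} {u v : V}

lemma GyarfasChain.exists_capture [Finite V] (h : GyarfasChain G l) (hv : v ∈ current l) :
    ∃ t, GyarfasChain G t ∧ l <:+ t ∧ v ∈ current t \ remaining G t := by
  induction hn : (remaining G l).ncard using Nat.strong_induction_on generalizing l with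
  | _ n ih =>
    by_cases hvr : v ∈ remaining G l
    · have hc := h.cons ((G.induce (remaining G l)).connectedComponentMk ⟨v, hvr⟩)
      obtain ⟨t, ht, hst, hvt⟩ :=
        ih _ (hn ▸ Set.ncard_lt_ncard hc.remaining_ssubset) hc ⟨⟨v, hvr⟩, rfl, rfl⟩ rfl
      exact ⟨t, ht, (List.suffix_cons _ _).trans hst, hvt⟩
    · exact ⟨l, h, List.suffix_refl l, hv, hvr⟩

lemma GyarfasChain.exists_chainBag_of_adj_of_mem [Finite V] (h : GyarfasChain G l)
    (hu : u ∈ closedNbhdSet G (pathSet l)) (hv : v ∈ current l) (huv : G.Adj u v) :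
    ∃ t, GyarfasChain G t ∧ u ∈ chainBag G t ∧ v ∈ chainBag G t := by
  obtain ⟨t, ht, hlt, hvt⟩ := h.exists_capture hv
  exact ⟨t, ht, ⟨closedNbhdSet_mono (pathSet_mono hlt) hu, mem_closedNbhdSet_of_adj hvt.1 huv⟩,
    mem_chainBag_of_mem_current_diff hvt⟩

lemma GyarfasChain.exists_chainBag_of_adj [Finite V] (h : GyarfasChain G l)
    (hu : u ∈ remaining G l) (hv : v ∈ remaining G l) (huv : G.Adj u v) :
    ∃ t, GyarfasChain G t ∧ u ∈ chainBag G t ∧ v ∈ chainBag G t := by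
  induction hn : (remaining G l).ncard using Nat.strong_induction_on generalizing l with
  | _ n ih =>
    set K := (G.induce (remaining G l)).connectedComponentMk ⟨v, hv⟩
    have hc := h.cons K
    have hvK : v ∈ componentVerts K := ⟨⟨v, hv⟩, rfl, rfl⟩
    have huK : u ∈ componentVerts K := mem_componentVerts_of_adj hvK hu huv.symm
    by_cases hu' : u ∈ remaining G ((pivot G l K, componentVerts K) :: l)
    · by_cases hv' : v ∈ remaining G ((pivot G l K, componentVerts K) :: l)
      · exact ih _ (hn ▸ Set.ncard_lt_ncard hc.remaining_ssubset) hc hu' hv' rfl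
      · obtain ⟨t, ht, hvt, hut⟩ := hc.exists_chainBag_of_adj_of_mem
          (current_diff_remaining_subset _ ⟨hvK, hv'⟩) huK huv.symm
        exact ⟨t, ht, hut, hvt⟩
    · exact hc.exists_chainBag_of_adj_of_mem (current_diff_remaining_subset _ ⟨huK, hu'⟩) hvK huv

lemma GyarfasChain.cons_suffix_of_suffix (ht' : GyarfasChain G t') (hs : l <:+ t') (hne : l ≠ t')
    (K : (G.induce (remaining G l)).ConnectedComponent) (hvK : v ∈ componentVerts K)
    (hv : v ∈ current t') : (pivot G l K, componentVerts K) :: l <:+ t' := by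
  obtain ⟨⟨w, C⟩, hx⟩ := List.exists_cons_suffix_of_suffix hs hne
  have hvC : v ∈ C := ht'.current_anti hx hv
  cases ht'.of_suffix hx with
  | cons _ K' => rwa [eq_of_mem_componentVerts hvK hvC]

lemma GyarfasChain.suffix_or_suffix (ht : GyarfasChain G t) (ht' : GyarfasChain G t')
    (hv : v ∈ current t) (hv' : v ∈ current t') : t <:+ t' ∨ t' <:+ t := by
  induction ht generalizing t' with
  | nil => exact Or.inl List.nil_suffix
  | @cons l h K ih =>
    cases ht' with
    | nil => exact Or.inr List.nil_suffix
    | @cons l' h' K' =>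
      have hne {l₁ l₂ : List (V × Set V)} (x : V × Set V) (hs : l₁ <:+ l₂) : l₁ ≠ x :: l₂ :=
        fun e => by simpa [e] using hs.length_le
      have hvl := remaining_subset_current l (componentVerts_subset K hv)
      have hvl' := remaining_subset_current l' (componentVerts_subset K' hv')
      rcases ih h' hvl hvl' with hs | hs
      · exact Or.inl ((h'.cons K').cons_suffix_of_suffix (hs.trans (List.suffix_cons _ _))
          (hne _ hs) K hv hv')
      · exact Or.inr ((h.cons K).cons_suffix_of_suffix (hs.trans (List.suffix_cons _ _))
          (hne _ hs) K' hv' hv)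

lemma GyarfasChain.eq_of_mem_current_diff (ht : GyarfasChain G t) (ht' : GyarfasChain G t')
    (hv : v ∈ current t \ remaining G t) (hv' : v ∈ current t' \ remaining G t') : t = t' := by
  by_contra hne
  rcases ht.suffix_or_suffix ht' hv.1 hv'.1 with hs | hs
  · exact hv.2 (ht'.current_subset_remaining hs hne hv'.1)
  · exact hv'.2 (ht.current_subset_remaining hs (Ne.symm hne) hv.1)

end Capture

section Decomposition

variable (G : SimpleGraph V) [Finite V]

noncomputable def gyarfasDecomp : TreeDecomp G where
  ι := {l : List (V × Set V) // GyarfasChain G l}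
  tree := parentGraph fun t => ⟨t.1.tail, t.2.tail⟩
  isTree := by
    refine isTree_parentGraph (fun t => t.1.length) ?_ ⟨[], .nil⟩ ?_
    · rintro ⟨_ | ⟨x, l⟩, ht⟩ hne
      · exact absurd rfl hne
      · simp
    · rintro ⟨_ | ⟨x, l⟩, ht⟩ he
      · rfl
      · simpa using congrArg (fun t => t.1.length) he
  bag t := chainBag G t.1
  bag_vert v :=
    let ⟨t, ht, _, hv⟩ := GyarfasChain.nil.exists_capture (G := G) (Set.mem_univ v)
    ⟨⟨t, ht⟩, mem_chainBag_of_mem_current_diff hv⟩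
  bag_edge u v huv :=
    let ⟨t, ht, hu, hv⟩ := GyarfasChain.nil.exists_chainBag_of_adj (Set.mem_univ u)
      (Set.mem_univ v) huv
    ⟨⟨t, ht⟩, hu, hv⟩
  bag_conn v := by
    obtain ⟨t₀, ht₀, -, hv₀⟩ := GyarfasChain.nil.exists_capture (G := G) (Set.mem_univ v)
    refine connected_induce_parentGraph (fun t => t.1.length)
      (a₀ := ⟨t₀, ht₀⟩) (mem_chainBag_of_mem_current_diff hv₀) ?_
    rintro ⟨_ | ⟨⟨w, C⟩, l⟩, ht⟩ hv hne
    · simp [chainBag, pathSet, pathOf] at hv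
    -- if `v ∈ C`, membership in the bag forces `v ∈ N[w]`, so the node is `t₀`
    have hvC : v ∉ C := fun hvC => hne <| Subtype.ext <| ht.eq_of_mem_current_diff ht₀
      ⟨hvC, ht.disjoint_remaining.notMem_of_mem_right hv.1⟩ hv₀
    exact ⟨ht.mem_chainBag_tail hv hvC, by simp⟩

end Decomposition

lemma GyarfasChain.length_pathOf_le {G : SimpleGraph V} {s : ℕ} (h2 : Free (pathGraph s) G)
    (hs : 3 ≤ s) {l : List (V × Set V)} (h : GyarfasChain G l) : (pathOf l).length ≤ s - 2 := by
  cases h with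
  | nil => simp [pathOf]
  | @cons l h K =>
    rcases l with _ | ⟨⟨w, C⟩, r⟩
    · simp only [pathOf, List.map_cons, List.map_nil, List.length_singleton]
      omega
    -- a neighbour in `C_k` of the newest path vertex extends the path to a longer induced path
    obtain ⟨-, y, hyK, hyp⟩ := h.pivot_spec K
    have hy : y ∉ closedNbhdSet G (pathSet ((w, C) :: r)) :=
      h.disjoint_remaining.notMem_of_mem_left (componentVerts_subset K hyK)
    have := ((h.cons K).isInducedPath.cons hyp hy).length_lt h2
    simp only [pathOf, List.map_cons, List.length_cons] at this ⊢
    omega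

lemma treeIndepNum_le_alpha {G : SimpleGraph V} (D : TreeDecomp G) : treeIndepNum G ≤ D.alpha :=
  Nat.sInf_le ⟨D, rfl⟩

lemma TreeDecomp.alpha_le {G : SimpleGraph V} {D : TreeDecomp G} {k : ℕ}
    (h : ∀ t, indepNumOn G (D.bag t) ≤ k) : D.alpha ≤ k :=
  csSup_le' (by rintro _ ⟨t, rfl⟩; exact h t)

lemma indepNumOn_le {G : SimpleGraph V} {s : Set V} {k : ℕ}
    (h : ∀ T : Finset V, ↑T ⊆ s → IsIndepSet G ↑T → T.card ≤ k) : indepNumOn G s ≤ k :=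
  csSup_le' (by rintro _ ⟨T, hT, hind, rfl⟩; exact h T hT hind)

/-- Let `d ≥ 2` and `s ≥ 3` be integers and let `G` be a
`{K_{1,d}, P_s}`-free graph. Then `tree-α(G) ≤ (d−1)(s−2)`. -/
theorem treeIndepNum_le_of_star_path_free
    (d s : ℕ) (hd : 2 ≤ d) (hs : 3 ≤ s)
    {V : Type} [Fintype V] (G : SimpleGraph V)
    (h1 : Free (star d) G) (h2 : Free (SimpleGraph.pathGraph s) G) :
    treeIndepNum G ≤ (d - 1) * (s - 2) := by
  refine (treeIndepNum_le_alpha (gyarfasDecomp G)).trans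
    (TreeDecomp.alpha_le fun t => indepNumOn_le fun T hT hind => ?_)
  calc T.card ≤ (d - 1) * (pathOf t.1).length :=
        card_le_of_subset_closedNbhdSet h1 hd _ (hT.trans Set.inter_subset_left) hind
    _ ≤ (d - 1) * (s - 2) := Nat.mul_le_mul_left _ (t.2.length_pathOf_le h2 hs)

end PaperTIN
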